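/- arXiv:1409.5504 — 2 statements merged into one kernel-verified Lean document; each statement's English description precedes it below -/
import Mathlib

section
/- Let h be a negatively curved singular Hermitian metric on the trivial rank-r bundle over an open set Ω ⊆ ℂⁿ, and let U ⋐ Ω be a relatively compact open subset. Then there exists a constant C > 0 such that |h_{ij}(x)| ≤ C for all x ∈ U and all 1 ≤ i, j ≤ r. Consequently, denoting by 0 ≤ λ₁(x) ≤ … ≤ λ_r(x) the eigenvalues of h(x): λ_r(x) ≤ rC for all x ∈ U, λ₁(x) ≥ (rC)^{1-r} det h(x) for all x ∈ U, and h(x) − ((rC)^{1-r} det h(x))·I_r is positive semidefinite for every x ∈ U. -/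
/-!
Testing negative curvature against the constant sections `eᵢ` shows that `log hᵢᵢ` is
plurisubharmonic, hence upper semicontinuous and bounded above on the compact set `closure U`.
For a positive semidefinite matrix `|hᵢⱼ|² ≤ hᵢᵢ hⱼⱼ`, so all entries are bounded by the same
`C`. Then `λ_r ≤ tr h ≤ rC`, and `det h = ∏ λₖ ≤ λ₁ (rC)^{r-1}` bounds `λ₁` from below.
-/

open MeasureTheory Filter Set Topology
open scoped ComplexOrder

noncomputable section

/-- The circle average of an `EReal`-valued function, defined as the supremum of the averages
of integrable real-valued minorants (the lower integral). -/
def lowerCircleAvg {E : Type*} [AddCommGroup E] [Module ℂ E]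
    (φ : E → EReal) (a b : E) (ρ : ℝ) : EReal :=
  ⨆ g ∈ {g : ℝ → ℝ |
      IntervalIntegrable g volume 0 (2 * Real.pi) ∧
      ∀ θ ∈ Set.Icc (0 : ℝ) (2 * Real.pi),
        (g θ : EReal) ≤ φ (a + ((ρ : ℂ) * Complex.exp ((θ : ℂ) * Complex.I)) • b)},
    (((2 * Real.pi)⁻¹ * ∫ θ in (0:ℝ)..(2 * Real.pi), g θ : ℝ) : EReal)

/-- `φ : E → [-∞, ∞)` is plurisubharmonic on `Ω`: upper semicontinuous, never `+∞`,
not identically `-∞` on any connected component of `Ω`, and satisfying the sub-mean value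
inequality on every complex disc contained in `Ω`. -/
def PSHOn {E : Type*} [NormedAddCommGroup E] [NormedSpace ℂ E]
    (φ : E → EReal) (Ω : Set E) : Prop :=
  UpperSemicontinuousOn φ Ω ∧
  (∀ x ∈ Ω, φ x ≠ ⊤) ∧
  (∀ x ∈ Ω, ∃ y ∈ connectedComponentIn Ω x, φ y ≠ ⊥) ∧
  (∀ a ∈ Ω, ∀ b : E, ∀ ρ : ℝ, 0 < ρ →
    (∀ l : ℂ, ‖l‖ ≤ ρ → a + l • b ∈ Ω) →
    φ a ≤ lowerCircleAvg φ a b ρ)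

/-- Extended-real logarithm of a nonnegative real number: `log 0 = -∞`. -/
def elog (x : ℝ) : EReal := if x ≤ 0 then (⊥ : EReal) else ((Real.log x : ℝ) : EReal)

/-- `|v|²_h(x) = ∑ᵢⱼ h_{ij}(x) vⁱ(x) ⬝ conj (v^j(x))`. -/
def hermNormSq {E : Type*} {ι : Type*} [Fintype ι]
    (h : E → Matrix ι ι ℂ) (v : E → ι → ℂ) (x : E) : ℝ :=
  (∑ i, ∑ j, h x i j * v x i * (starRingEnd ℂ) (v x j)).re

/-- A singular Hermitian metric on the trivial bundle of rank `#ι` over `Ω`: a measurable map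
defined on `Ω` with values in the positive semidefinite Hermitian matrices with
`0 < det h < +∞` almost everywhere on `Ω`. -/
def IsSingMetricOn {E : Type*} [MeasureSpace E] {ι : Type*} [Fintype ι] [DecidableEq ι]
    (h : E → Matrix ι ι ℂ) (Ω : Set E) : Prop :=
  (∀ i j, Measurable fun x : Ω => h x.1 i j) ∧
  (∀ x ∈ Ω, (h x).PosSemidef) ∧
  (∀ᵐ x ∂(volume.restrict Ω), 0 < (h x).det.re)

/-- `h` is negatively curved (Griffiths semi-negative) on `Ω`: for every open `U ⊆ Ω` and
every holomorphic section `v` on `U` not identically zero on any connected component of `U`,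
`log |v|²_h` is plurisubharmonic on `U`. -/
def NegCurved {E : Type*} [NormedAddCommGroup E] [NormedSpace ℂ E] {ι : Type*} [Fintype ι]
    (h : E → Matrix ι ι ℂ) (Ω : Set E) : Prop :=
  ∀ U : Set E, IsOpen U → U ⊆ Ω →
    ∀ v : E → ι → ℂ, DifferentiableOn ℂ v U →
      (∀ x ∈ U, ∃ y ∈ connectedComponentIn U x, v y ≠ 0) →
      PSHOn (fun x => elog (hermNormSq h v x)) U


theorem UpperSemicontinuousOn.exists_le_coe_of_isCompact {α : Type*} [TopologicalSpace α]
    {φ : α → EReal} {K : Set α} (hK : IsCompact K) (hφ : UpperSemicontinuousOn φ K)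
    (htop : ∀ x ∈ K, φ x ≠ ⊤) : ∃ M : ℝ, ∀ x ∈ K, φ x ≤ M := by
  rcases K.eq_empty_or_nonempty with rfl | hne
  · exact ⟨0, by simp⟩
  obtain ⟨a, ha, hmax⟩ := hφ.exists_isMaxOn hne hK
  exact ⟨(φ a).toReal, fun x hx => (hmax hx).trans (EReal.le_coe_toReal (htop a ha))⟩

theorem elog_ne_top (t : ℝ) : elog t ≠ ⊤ := by
  unfold elog; split_ifs <;> simp

theorem le_exp_of_elog_le {t M : ℝ} (h : elog t ≤ M) : t ≤ Real.exp M := by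
  unfold elog at h
  split_ifs at h with ht
  · exact ht.trans (Real.exp_pos M).le
  · rw [not_le] at ht
    rw [← Real.exp_log ht]
    exact Real.exp_le_exp.2 (EReal.coe_le_coe_iff.1 h)

theorem hermNormSq_const_single {E ι : Type*} [Fintype ι] [DecidableEq ι]
    (h : E → Matrix ι ι ℂ) (i : ι) (x : E) :
    hermNormSq h (fun _ => Pi.single i 1) x = (h x i i).re := by
  simp [hermNormSq, Pi.single_apply]

section NegCurved

variable {E ι : Type*} [NormedAddCommGroup E] [NormedSpace ℂ E] [Fintype ι] [DecidableEq ι]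
  {h : E → Matrix ι ι ℂ} {Ω : Set E}

theorem NegCurved.pshOn_elog_re_apply_self (hneg : NegCurved h Ω) (hΩ : IsOpen Ω) (i : ι) :
    PSHOn (fun x => elog (h x i i).re) Ω := by
  simpa only [hermNormSq_const_single] using
    hneg Ω hΩ subset_rfl (fun _ => Pi.single i 1) (differentiableOn_const _) fun x hx =>
      ⟨x, mem_connectedComponentIn hx, by simp⟩

theorem NegCurved.exists_re_apply_self_le_of_isCompact (hneg : NegCurved h Ω) (hΩ : IsOpen Ω)
    {K : Set E} (hK : IsCompact K) (hKΩ : K ⊆ Ω) :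
    ∃ C > 0, ∀ x ∈ K, ∀ i, (h x i i).re ≤ C := by
  choose M hM using fun i => ((hneg.pshOn_elog_re_apply_self hΩ i).1.mono hKΩ)
    |>.exists_le_coe_of_isCompact hK fun x _ => elog_ne_top _
  obtain ⟨M₀, hM₀⟩ := Finite.exists_le M
  refine ⟨max 1 (Real.exp M₀), by positivity, fun x hx i => ?_⟩
  calc (h x i i).re ≤ Real.exp (M i) := le_exp_of_elog_le (hM i x hx)
    _ ≤ Real.exp M₀ := Real.exp_le_exp.2 (hM₀ i)
    _ ≤ max 1 (Real.exp M₀) := le_max_right _ _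

end NegCurved

namespace Matrix

variable {ι : Type*} {A : Matrix ι ι ℂ}

theorem PosSemidef.norm_sq_apply_le (hA : A.PosSemidef) (i j : ι) :
    ‖A i j‖ ^ 2 ≤ (A i i).re * (A j j).re := by
  have hji : A j i = star (A i j) := by rw [← hA.1.apply i j, star_star]
  have him : ∀ k, (A k k).im = 0 := fun k => (Complex.nonneg_iff.1 hA.diag_nonneg).2.symm
  -- the principal `2 × 2` minor on `{i, j}` is nonnegative
  have h2 := (Complex.le_def.1 (hA.submatrix ![i, j]).det_nonneg).1
  rw [det_fin_two] at h2
  simp only [Complex.zero_re, Fin.isValue, submatrix_apply, cons_val_zero, cons_val_one,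
    cons_val_fin_one, hji, RCLike.star_def, Complex.mul_conj, Complex.normSq_eq_norm_sq,
    Complex.ofReal_pow, Complex.sub_re, Complex.mul_re, him, mul_zero, sub_zero, sub_nonneg] at h2
  rwa [← Complex.ofReal_pow, Complex.ofReal_re] at h2

theorem PosSemidef.norm_apply_le (hA : A.PosSemidef) {C : ℝ} (hd : ∀ i, (A i i).re ≤ C)
    (i j : ι) : ‖A i j‖ ≤ C := by
  have hre : ∀ k, 0 ≤ (A k k).re := fun k => (Complex.nonneg_iff.1 hA.diag_nonneg).1
  refine le_of_pow_le_pow_left₀ two_ne_zero ((hre i).trans (hd i)) ?_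
  calc ‖A i j‖ ^ 2 ≤ (A i i).re * (A j j).re := hA.norm_sq_apply_le i j
    _ ≤ C ^ 2 := by rw [sq]; exact mul_le_mul (hd i) (hd j) (hre j) ((hre i).trans (hd i))

variable [Fintype ι] [DecidableEq ι]

theorem PosSemidef.eigenvalues_le (hA : A.PosSemidef) {C : ℝ} (hd : ∀ i, (A i i).re ≤ C)
    (i : ι) : hA.1.eigenvalues i ≤ Fintype.card ι * C :=
  calc hA.1.eigenvalues i ≤ ∑ k, hA.1.eigenvalues k :=
        Finset.single_le_sum (fun k _ => hA.eigenvalues_nonneg k) (Finset.mem_univ i)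
    _ = ∑ k, (A k k).re := by
        simpa [trace, Complex.re_sum] using (congrArg Complex.re hA.1.trace_eq_sum_eigenvalues).symm
    _ ≤ ∑ _k : ι, C := Finset.sum_le_sum fun k _ => hd k
    _ = Fintype.card ι * C := by simp

theorem IsHermitian.coe_re_det (hA : A.IsHermitian) : (A.det.re : ℂ) = A.det :=
  Complex.conj_eq_iff_re.1 (by rw [← Complex.star_def, ← det_conjTranspose, hA.eq])

theorem PosSemidef.det_re_div_le_eigenvalues (hA : A.PosSemidef) {C : ℝ} (hC : 0 < C)
    (hd : ∀ i, (A i i).re ≤ C) (i : ι) :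
    A.det.re / (Fintype.card ι * C) ^ (Fintype.card ι - 1) ≤ hA.1.eigenvalues i := by
  have hcard : (0 : ℝ) < Fintype.card ι := by exact_mod_cast Fintype.card_pos_iff.2 ⟨i⟩
  rw [div_le_iff₀ (by positivity)]
  calc A.det.re = ∏ k, hA.1.eigenvalues k := by
        apply Complex.ofReal_injective
        rw [hA.1.coe_re_det, hA.1.det_eq_prod_eigenvalues, Complex.ofReal_prod]
        rfl
    _ = hA.1.eigenvalues i * ∏ k ∈ Finset.univ.erase i, hA.1.eigenvalues k :=
        (Finset.mul_prod_erase _ _ (Finset.mem_univ i)).symm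
    _ ≤ hA.1.eigenvalues i * ∏ _k ∈ Finset.univ.erase i, (Fintype.card ι * C) :=
        mul_le_mul_of_nonneg_left (Finset.prod_le_prod (fun k _ => hA.eigenvalues_nonneg k)
          fun k _ => hA.eigenvalues_le hd k) (hA.eigenvalues_nonneg i)
    _ = hA.1.eigenvalues i * (Fintype.card ι * C) ^ (Fintype.card ι - 1) := by
        rw [Finset.prod_const, Finset.card_erase_of_mem (Finset.mem_univ i), Finset.card_univ]

open scoped MatrixOrder in
theorem IsHermitian.posSemidef_sub_smul_one (hA : A.IsHermitian) {c : ℝ}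
    (hc : ∀ i, c ≤ hA.eigenvalues i) : (A - (c : ℂ) • 1).PosSemidef := by
  have := (algebraMap_le_iff_le_spectrum (R := ℝ) (a := A) hA).2 (by
    rw [hA.spectrum_real_eq_range_eigenvalues]
    rintro _ ⟨i, rfl⟩
    exact hc i)
  rwa [le_iff, Algebra.algebraMap_eq_smul_one, ← Complex.coe_smul] at this

end Matrix

theorem entry_and_eigenvalue_bounds_of_negCurved_general {n r : ℕ}
    (Ω : Set (Fin n → ℂ)) (hΩ : IsOpen Ω)
    (h : (Fin n → ℂ) → Matrix (Fin r) (Fin r) ℂ)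
    (hmet : IsSingMetricOn h Ω) (hneg : NegCurved h Ω)
    (U : Set (Fin n → ℂ))
    (hUc : IsCompact (closure U)) (hUΩ : closure U ⊆ Ω) :
    ∃ C : ℝ, 0 < C ∧
      (∀ x ∈ U, ∀ i j, ‖h x i j‖ ≤ C) ∧
      (∀ x, ∀ hx : x ∈ U,
        (∀ i, (hmet.2.1 x (hUΩ (subset_closure hx))).1.eigenvalues i ≤ (r : ℝ) * C) ∧
        (∀ i, (h x).det.re / ((r : ℝ) * C) ^ (r - 1) ≤
          (hmet.2.1 x (hUΩ (subset_closure hx))).1.eigenvalues i) ∧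
        (h x - ((h x).det / ((r : ℂ) * (C : ℂ)) ^ (r - 1)) •
          (1 : Matrix (Fin r) (Fin r) ℂ)).PosSemidef) := by
  obtain ⟨C, hC, hdiag⟩ := hneg.exists_re_apply_self_le_of_isCompact hΩ hUc hUΩ
  refine ⟨C, hC, fun x hx => ?_, fun x hx => ?_⟩
  · exact (hmet.2.1 x (hUΩ (subset_closure hx))).norm_apply_le (hdiag x (subset_closure hx))
  have hPSD := hmet.2.1 x (hUΩ (subset_closure hx))
  have hmax := hPSD.eigenvalues_le (hdiag x (subset_closure hx))
  have hmin := hPSD.det_re_div_le_eigenvalues hC (hdiag x (subset_closure hx))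
  rw [Fintype.card_fin] at hmax hmin
  refine ⟨hmax, hmin, ?_⟩
  convert hPSD.1.posSemidef_sub_smul_one hmin using 3
  push_cast [hPSD.1.coe_re_det]
  rfl

/-- Lemma 2.2.7(1): a negatively curved singular Hermitian metric has locally uniformly bounded
entries; on a relatively compact open subset `U ⋐ Ω`, the largest eigenvalue is at most `rC`,
the smallest eigenvalue is at least `(rC)^{1-r} det h`, and `h - (rC)^{1-r} (det h) • 1` is
positive semidefinite. -/
theorem entry_and_eigenvalue_bounds_of_negCurved {n r : ℕ}
    (Ω : Set (Fin n → ℂ)) (hΩ : IsOpen Ω)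
    (h : (Fin n → ℂ) → Matrix (Fin r) (Fin r) ℂ)
    (hmet : IsSingMetricOn h Ω) (hneg : NegCurved h Ω)
    (U : Set (Fin n → ℂ)) (hUopen : IsOpen U)
    (hUc : IsCompact (closure U)) (hUΩ : closure U ⊆ Ω) :
    ∃ C : ℝ, 0 < C ∧
      (∀ x ∈ U, ∀ i j, ‖h x i j‖ ≤ C) ∧
      (∀ x, ∀ hx : x ∈ U,
        (∀ i, (hmet.2.1 x (hUΩ (subset_closure hx))).1.eigenvalues i ≤ (r : ℝ) * C) ∧
        (∀ i, (h x).det.re / ((r : ℝ) * C) ^ (r - 1) ≤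
          (hmet.2.1 x (hUΩ (subset_closure hx))).1.eigenvalues i) ∧
        (h x - ((h x).det / ((r : ℂ) * (C : ℂ)) ^ (r - 1)) •
          (1 : Matrix (Fin r) (Fin r) ℂ)).PosSemidef) :=
  entry_and_eigenvalue_bounds_of_negCurved_general Ω hΩ h hmet hneg U hUc hUΩ
end
end

section
/- Let h be a negatively curved singular Hermitian metric on the trivial rank-r bundle over an open set Ω ⊆ ℂⁿ, let 1 ≤ s ≤ r, and let B : Ω → M_{r×s}(ℂ) be a holomorphic matrix-valued map such that B(x) has rank s (is injective) for every x ∈ Ω (a holomorphic frame of a rank-s subbundle S of the trivial bundle). Then the restricted metric h_S, defined so that |v|²_{h_S}(x) = |B(x)v(x)|²_h(x) for holomorphic v : U → ℂ^s, is a singular Hermitian metric on the trivial rank-s bundle over Ω (in particular 0 < det h_S < +∞ almost everywhere) and is negatively curved. -/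
open MeasureTheory Filter Set Topology
open scoped ComplexOrder

noncomputable section

/-!
The restricted metric is `h_S = Bᵀ h B̄`, a congruence transform of `h`: it is positive
semidefinite everywhere and positive definite wherever `h` is, because `B` is injective. For a
holomorphic `v`, `log |v|²_{h_S} = log |B v|²_h`, and `B v` is again holomorphic and vanishes
only where `v` does, so negative curvature of `h` transfers directly.
-/

open scoped Matrix

namespace Matrix

lemma conjTranspose_transpose_mulVec_star {m n R : Type*} [Fintype n] [CommSemiring R]
    [StarRing R] (B : Matrix m n R) (w : n → R) :
    Bᴴᵀ *ᵥ star w = star (B *ᵥ w) := by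
  rw [mulVec_transpose, star_mulVec]

lemma injective_conjTranspose_transpose_mulVec {m n R : Type*} [Fintype n] [CommSemiring R]
    [StarRing R] {B : Matrix m n R} (hB : Function.Injective B.mulVec) :
    Function.Injective Bᴴᵀ.mulVec := by
  intro v w hvw
  rw [← star_star v, ← star_star w, conjTranspose_transpose_mulVec_star,
    conjTranspose_transpose_mulVec_star, star_inj] at hvw
  exact star_injective (hB hvw)

lemma measurable_mul_apply {α l m n R : Type*} [MeasurableSpace α] [Fintype m]
    [NonUnitalNonAssocSemiring R] [MeasurableSpace R] [MeasurableMul₂ R] [MeasurableAdd₂ R]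
    {M : α → Matrix l m R} {N : α → Matrix m n R} (hM : ∀ i j, Measurable fun x => M x i j)
    (hN : ∀ i j, Measurable fun x => N x i j) (i : l) (j : n) :
    Measurable fun x => (M x * N x) i j := by
  simp only [mul_apply]
  exact Finset.measurable_sum _ fun k _ => (hM i k).mul (hN k j)

lemma differentiableOn_mulVec {𝕜 F m n : Type*} [Fintype n] [NontriviallyNormedField 𝕜]
    [NormedAddCommGroup F] [NormedSpace 𝕜 F] {B : F → Matrix m n 𝕜} {v : F → n → 𝕜}
    {U : Set F} (hB : ∀ i j, DifferentiableOn 𝕜 (fun x => B x i j) U)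
    (hv : DifferentiableOn 𝕜 v U) :
    DifferentiableOn 𝕜 (fun x => B x *ᵥ v x) U := by
  refine differentiableOn_pi.mpr fun i => ?_
  simp only [mulVec, dotProduct]
  exact DifferentiableOn.fun_sum fun k _ => (hB i k).mul (differentiableOn_pi.mp hv k)

end Matrix

section

variable {E ι κ : Type*} [Fintype ι]

lemma hermNormSq_eq_re_dotProduct (h : E → Matrix ι ι ℂ) (v : E → ι → ℂ) (x : E) :
    hermNormSq h v x = (v x ⬝ᵥ h x *ᵥ star (v x)).re := by
  simp only [hermNormSq, dotProduct, Matrix.mulVec, Finset.mul_sum, Pi.star_apply,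
    Complex.star_def]
  congr 1
  exact Finset.sum_congr rfl fun i _ => Finset.sum_congr rfl fun j _ => by ring

/-- The metric `w ↦ |B w|²_h`. Since `hermNormSq` pairs `h` with `v ⊗ v̄`, its matrix is
`Bᵀ h B̄`, written here as `Cᴴ h C` with `C = B̄ = Bᴴᵀ`. -/
def restrictMetric (h : E → Matrix ι ι ℂ) (B : E → Matrix ι κ ℂ) (x : E) : Matrix κ κ ℂ :=
  (B x)ᴴᵀᴴ * h x * (B x)ᴴᵀ

lemma hermNormSq_restrictMetric [Fintype κ] (h : E → Matrix ι ι ℂ) (B : E → Matrix ι κ ℂ)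
    (v : E → κ → ℂ) (x : E) :
    hermNormSq (restrictMetric h B) v x = hermNormSq h (fun y => B y *ᵥ v y) x := by
  rw [hermNormSq_eq_re_dotProduct, hermNormSq_eq_re_dotProduct, restrictMetric,
    ← Matrix.mulVec_mulVec, ← Matrix.mulVec_mulVec, Matrix.conjTranspose_transpose_mulVec_star,
    Matrix.dotProduct_mulVec, Matrix.conjTranspose_transpose_eq_transpose_conjTranspose,
    Matrix.conjTranspose_conjTranspose, Matrix.vecMul_transpose]

lemma measurable_restrictMetric_apply {α : Type*} [MeasurableSpace α] {h : α → Matrix ι ι ℂ}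
    {B : α → Matrix ι κ ℂ} (hh : ∀ i j, Measurable fun x => h x i j)
    (hB : ∀ i j, Measurable fun x => B x i j) (i j : κ) :
    Measurable fun x => restrictMetric h B x i j := by
  have hconj : ∀ i j, Measurable fun x => (B x)ᴴᵀ i j := fun i j =>
    Complex.continuous_conj.measurable.comp (hB i j)
  have hconjT : ∀ i j, Measurable fun x => (B x)ᴴᵀᴴ i j := fun i j =>
    Complex.continuous_conj.measurable.comp (hconj j i)
  exact Matrix.measurable_mul_apply (Matrix.measurable_mul_apply hconjT hh) hconj i j

lemma posDef_restrictMetric [Fintype κ] [DecidableEq ι] {h : E → Matrix ι ι ℂ}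
    {B : E → Matrix ι κ ℂ} {x : E} (hpsd : (h x).PosSemidef) (hdet : (h x).det ≠ 0)
    (hB : Function.Injective (B x).mulVec) : (restrictMetric h B x).PosDef :=
  (hpsd.posDef_iff_det_ne_zero.mpr hdet).conjTranspose_mul_mul_same
    (Matrix.injective_conjTranspose_transpose_mulVec hB)

lemma isSingMetricOn_restrictMetric [Fintype κ] [MeasureSpace E] [DecidableEq ι]
    [DecidableEq κ] {h : E → Matrix ι ι ℂ} {B : E → Matrix ι κ ℂ} {Ω : Set E} (hΩ : MeasurableSet Ω)
    (hmet : IsSingMetricOn h Ω) (hBm : ∀ i j, Measurable fun x : Ω => B x.1 i j)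
    (hBinj : ∀ x ∈ Ω, Function.Injective (B x).mulVec) :
    IsSingMetricOn (restrictMetric h B) Ω := by
  obtain ⟨hmeas, hpsd, hdet⟩ := hmet
  refine ⟨measurable_restrictMetric_apply hmeas hBm, fun x hx => ?_, ?_⟩
  · exact (hpsd x hx).conjTranspose_mul_mul_same _
  filter_upwards [hdet, ae_restrict_mem hΩ] with x hdet hx
  have hne : (h x).det ≠ 0 := fun h0 => by simp [h0] at hdet
  exact (Complex.pos_iff.mp (posDef_restrictMetric (hpsd x hx) hne (hBinj x hx)).det_pos).1

lemma negCurved_restrictMetric [Fintype κ] [NormedAddCommGroup E] [NormedSpace ℂ E]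
    {h : E → Matrix ι ι ℂ} {B : E → Matrix ι κ ℂ} {Ω : Set E} (hneg : NegCurved h Ω)
    (hB : ∀ i j, DifferentiableOn ℂ (fun x => B x i j) Ω)
    (hBinj : ∀ x ∈ Ω, Function.Injective (B x).mulVec) :
    NegCurved (restrictMetric h B) Ω := by
  intro U hU hUΩ v hv hv_ne
  simp only [hermNormSq_restrictMetric]
  refine hneg U hU hUΩ _ (Matrix.differentiableOn_mulVec (fun i j => (hB i j).mono hUΩ) hv)
    fun x hx => ?_
  obtain ⟨y, hy, hvy⟩ := hv_ne x hx
  have hyΩ : y ∈ Ω := hUΩ (connectedComponentIn_subset U x hy)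
  exact ⟨y, hy, ((hBinj y hyΩ).ne_iff' (Matrix.mulVec_zero _)).mpr hvy⟩

end

theorem restriction_to_subbundle_negCurved_general {n r s : ℕ}
    (Ω : Set (Fin n → ℂ)) (hΩ : IsOpen Ω)
    (h : (Fin n → ℂ) → Matrix (Fin r) (Fin r) ℂ)
    (hmet : IsSingMetricOn h Ω) (hneg : NegCurved h Ω)
    (B : (Fin n → ℂ) → Matrix (Fin r) (Fin s) ℂ)
    (hB : ∀ i j, DifferentiableOn ℂ (fun x => B x i j) Ω)
    (hBinj : ∀ x ∈ Ω, Function.Injective (B x).mulVec) :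
    ∃ hS : (Fin n → ℂ) → Matrix (Fin s) (Fin s) ℂ,
      (∀ x ∈ Ω, ∀ w : Fin s → ℂ,
        hermNormSq hS (fun _ => w) x = hermNormSq h (fun _ => (B x).mulVec w) x) ∧
      IsSingMetricOn hS Ω ∧ NegCurved hS Ω :=
  ⟨restrictMetric h B, fun x _ _ => hermNormSq_restrictMetric h B _ x,
    isSingMetricOn_restrictMetric hΩ.measurableSet hmet
      (fun i j => (hB i j).continuousOn.domRestrict.measurable) hBinj,
    negCurved_restrictMetric hneg hB hBinj⟩

/-- Local form of Lemma 2.3.4(1) / 2.4.3(1): the restriction of a negatively curved singular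
Hermitian metric `h` of rank `r` to a holomorphic rank-`s` subbundle, given by a holomorphic
everywhere-injective matrix `B : Ω → M_{r×s}(ℂ)`, is a negatively curved singular Hermitian
metric `h_S` of rank `s`, characterized by `|v|²_{h_S}(x) = |B(x)v(x)|²_h(x)`. -/
theorem restriction_to_subbundle_negCurved {n r s : ℕ} (hs1 : 1 ≤ s) (hsr : s ≤ r)
    (Ω : Set (Fin n → ℂ)) (hΩ : IsOpen Ω)
    (h : (Fin n → ℂ) → Matrix (Fin r) (Fin r) ℂ)
    (hmet : IsSingMetricOn h Ω) (hneg : NegCurved h Ω)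
    (B : (Fin n → ℂ) → Matrix (Fin r) (Fin s) ℂ)
    (hB : ∀ i j, DifferentiableOn ℂ (fun x => B x i j) Ω)
    (hBinj : ∀ x ∈ Ω, Function.Injective (B x).mulVec) :
    ∃ hS : (Fin n → ℂ) → Matrix (Fin s) (Fin s) ℂ,
      (∀ x ∈ Ω, ∀ w : Fin s → ℂ,
        hermNormSq hS (fun _ => w) x = hermNormSq h (fun _ => (B x).mulVec w) x) ∧
      IsSingMetricOn hS Ω ∧ NegCurved hS Ω :=
  restriction_to_subbundle_negCurved_general Ω hΩ h hmet hneg B hB hBinj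
end
end
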